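/- arXiv:1907.00405 — 4 statements merged into one kernel-verified Lean document; each statement's English description precedes it below -/
import Mathlib

section
/- For complex numbers a_0, a_1, ..., a_{2^s} and any integer j_0 with 0 ≤ j_0 ≤ 2^s, the maximum of |a_j| over 0 ≤ j ≤ 2^s is at most |a_{j_0}| + √2 · ∑_{l=0}^{s} ( ∑_{0 ≤ κ < 2^{s-l}} |a_{(κ+1)·2^l} − a_{κ·2^l}|² )^{1/2}. -/
/-!
Write `⌊n⌋ₗ = ⌊n / 2^l⌋ 2^l`. For `n ≤ 2^s`, `a n - a 0` telescopes as the sum over `l ≤ s` of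
`a ⌊n⌋ₗ - a ⌊n⌋ₗ₊₁`, and each of these steps is either `0` or one of the dyadic increments
`a ((κ+1) 2^l) - a (κ 2^l)` of level `l`. Hence at each level the steps of `j` and `j₀` differ by
at most two distinct increments, and by Cauchy–Schwarz the sum of their norms is at most `√2`
times the `ℓ²` norm of all increments of that level.
-/

open Finset

variable {E : Type*} [SeminormedAddCommGroup E]

def dyadicFloor (l n : ℕ) : ℕ := n / 2 ^ l * 2 ^ l

@[simp]
lemma dyadicFloor_zero (n : ℕ) : dyadicFloor 0 n = n := by
  simp [dyadicFloor]

lemma dyadicFloor_eq_zero_of_lt {l n : ℕ} (h : n < 2 ^ l) : dyadicFloor l n = 0 := by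
  simp [dyadicFloor, Nat.div_eq_of_lt h]

lemma dyadicFloor_succ (l n : ℕ) : dyadicFloor (l + 1) n = n / 2 ^ l / 2 * 2 * 2 ^ l := by
  rw [dyadicFloor, Nat.div_div_eq_div_mul, pow_succ, mul_assoc, mul_comm 2]

lemma sum_range_sub_dyadicFloor (a : ℕ → E) {m n : ℕ} (hn : n < 2 ^ m) :
    ∑ l ∈ range m, (a (dyadicFloor l n) - a (dyadicFloor (l + 1) n)) = a n - a 0 := by
  rw [sum_range_sub' (fun l => a (dyadicFloor l n)), dyadicFloor_zero,
    dyadicFloor_eq_zero_of_lt hn]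

lemma sub_dyadicFloor_succ_eq_zero_or_increment (a : ℕ → E) {s l n : ℕ} (hn : n ≤ 2 ^ s)
    (hl : l ≤ s) :
    a (dyadicFloor l n) - a (dyadicFloor (l + 1) n) = 0 ∨
      ∃ κ ∈ range (2 ^ (s - l)),
        a (dyadicFloor l n) - a (dyadicFloor (l + 1) n) = a ((κ + 1) * 2 ^ l) - a (κ * 2 ^ l) := by
  rw [dyadicFloor_succ, dyadicFloor]
  obtain ⟨k, hk | hk⟩ := Nat.even_or_odd' (n / 2 ^ l)
  · left
    rw [hk, Nat.mul_div_cancel_left k two_pos, mul_comm k, sub_self]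
  · right
    have hle : n / 2 ^ l ≤ 2 ^ (s - l) :=
      (Nat.div_le_div_right hn).trans (Nat.pow_div hl two_pos).le
    refine ⟨2 * k, mem_range.2 (by omega), ?_⟩
    rw [hk, show (2 * k + 1) / 2 * 2 = 2 * k by omega]

/-- The factor `√2` is only needed when `x` and `y` are two distinct increments. -/
lemma norm_sub_le_sqrt_two_mul_sqrt_sum_sq {ι : Type*} [DecidableEq ι] {g : ι → E}
    {t : Finset ι} {x y : E} (hx : x = 0 ∨ ∃ i ∈ t, x = g i) (hy : y = 0 ∨ ∃ i ∈ t, y = g i) :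
    ‖x - y‖ ≤ √2 * √(∑ i ∈ t, ‖g i‖ ^ 2) := by
  set S := ∑ i ∈ t, ‖g i‖ ^ 2
  have hsqrt : √S ≤ √2 * √S :=
    le_mul_of_one_le_left (Real.sqrt_nonneg _) (Real.one_le_sqrt.2 one_le_two)
  have norm_le_sqrt : ∀ z : E, (z = 0 ∨ ∃ i ∈ t, z = g i) → ‖z‖ ≤ √S := by
    rintro z (rfl | ⟨i, hi, rfl⟩)
    · simp
    · exact Real.le_sqrt_of_sq_le
        (single_le_sum (f := fun i => ‖g i‖ ^ 2) (fun _ _ => by positivity) hi)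
  rcases hx with rfl | ⟨i, hi, rfl⟩
  · simpa using (norm_le_sqrt y hy).trans hsqrt
  rcases hy with rfl | ⟨k, hk, rfl⟩
  · simpa using (norm_le_sqrt _ (Or.inr ⟨i, hi, rfl⟩)).trans hsqrt
  obtain rfl | hik := eq_or_ne i k
  · simp [S]
  have hpair : ‖g i‖ ^ 2 + ‖g k‖ ^ 2 ≤ S := by
    rw [← sum_pair (f := fun i => ‖g i‖ ^ 2) hik]
    exact sum_le_sum_of_subset_of_nonneg (insert_subset hi (singleton_subset_iff.2 hk))
      fun _ _ _ => by positivity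
  calc ‖g i - g k‖ ≤ ‖g i‖ + ‖g k‖ := norm_sub_le _ _
    _ ≤ √(2 * (‖g i‖ ^ 2 + ‖g k‖ ^ 2)) := Real.le_sqrt_of_sq_le add_sq_le
    _ ≤ √2 * √S := by
      rw [Real.sqrt_mul zero_le_two]
      gcongr

lemma norm_sub_dyadicFloor_sub_le (a : ℕ → E) {s l j j₀ : ℕ} (hj : j ≤ 2 ^ s) (hj₀ : j₀ ≤ 2 ^ s)
    (hl : l ≤ s) :
    ‖(a (dyadicFloor l j) - a (dyadicFloor (l + 1) j)) -
        (a (dyadicFloor l j₀) - a (dyadicFloor (l + 1) j₀))‖ ≤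
      √2 * √(∑ κ ∈ range (2 ^ (s - l)), ‖a ((κ + 1) * 2 ^ l) - a (κ * 2 ^ l)‖ ^ 2) :=
  norm_sub_le_sqrt_two_mul_sqrt_sum_sq (sub_dyadicFloor_succ_eq_zero_or_increment a hj hl)
    (sub_dyadicFloor_succ_eq_zero_or_increment a hj₀ hl)

/-- Rademacher–Menshov-type numerical inequality. -/
theorem stmt0 (s : ℕ) (a : ℕ → ℂ) (j₀ : ℕ) (hj₀ : j₀ ≤ 2^s) :
    ∀ j ≤ 2^s, ‖a j‖ ≤ ‖a j₀‖ +
      Real.sqrt 2 * ∑ l ∈ Finset.range (s+1),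
        Real.sqrt (∑ κ ∈ Finset.range (2^(s-l)),
          ‖a ((κ+1)*2^l) - a (κ*2^l)‖^2) := by
  intro j hj
  have hlt : ∀ n ≤ 2 ^ s, n < 2 ^ (s + 1) := fun n hn =>
    hn.trans_lt (Nat.pow_lt_pow_succ one_lt_two)
  have htelescope : a j - a j₀ = ∑ l ∈ range (s + 1),
      ((a (dyadicFloor l j) - a (dyadicFloor (l + 1) j)) -
        (a (dyadicFloor l j₀) - a (dyadicFloor (l + 1) j₀))) := by
    rw [sum_sub_distrib, sum_range_sub_dyadicFloor a (hlt j hj),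
      sum_range_sub_dyadicFloor a (hlt j₀ hj₀), sub_sub_sub_cancel_right]
  calc ‖a j‖ ≤ ‖a j₀‖ + ‖a j - a j₀‖ := norm_le_norm_add_norm_sub' _ _
    _ ≤ _ := by
      rw [htelescope, mul_sum]
      gcongr
      refine (norm_sum_le _ _).trans (sum_le_sum fun l hl => ?_)
      exact norm_sub_dyadicFloor_sub_le a hj hj₀ (Nat.lt_succ_iff.1 (mem_range.1 hl))
end

section
/- Let q be a positive integer, a an integer, b ∈ ℤⁿ, d a positive integer, and suppose gcd(a, b₁, ..., bₙ, q) = 1 but gcd(a, q) > 1. Then the normalized exponential sum S(a/q, b/q) = q^{-n} · ∑_{r ∈ ([0,q) ∩ ℤ)ⁿ} e( (a/q)·|r|^{2d} + (b/q)·r ) equals 0, where |r|² = r₁² + ... + rₙ² and e(x) = exp(2πix). -/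
/-!
Reduce the phase modulo `q`, so that `S` becomes a sum of the standard additive character of
`ZMod q` over `(ZMod q)ⁿ`. Write `v = gcd(a, q) > 1` and `q = v q'`. Then `a q' ≡ 0 (mod q)`, and
since `|x + q' y|² ≡ |x|² (mod q')`, translating `x` by `q' eᵢ` leaves `a |x|^{2d}` unchanged
mod `q` and adds `q' bᵢ` to the linear part. Choosing `i` with `v ∤ bᵢ` makes `q' bᵢ ≢ 0`, so the
translation multiplies the sum by a character value `≠ 1`, and the sum vanishes.
-/

open Finset

section Phase

variable {R ι : Type*} [CommRing R] [Fintype ι]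

def weylPhase (d : ℕ) (a : R) (b x : ι → R) : R :=
  a * (∑ i, x i ^ 2) ^ d + ∑ i, b i * x i

theorem sum_sq_add_smul (x v : ι → R) (m : R) :
    ∑ i, (x + m • v) i ^ 2 = ∑ i, x i ^ 2 + m * ∑ i, v i * (2 * x i + m * v i) := by
  simp only [Pi.add_apply, Pi.smul_apply, smul_eq_mul, mul_sum, ← sum_add_distrib]
  exact sum_congr rfl fun i _ => by ring

theorem mul_add_mul_pow_of_mul_eq_zero {a m : R} (ham : a * m = 0) (s t : R) (d : ℕ) :
    a * (s + m * t) ^ d = a * s ^ d := by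
  obtain ⟨z, hz⟩ := sub_dvd_pow_sub_pow (s + m * t) s d
  rw [add_sub_cancel_left] at hz
  linear_combination a * hz + t * z * ham

theorem weylPhase_add_smul {a m : R} (ham : a * m = 0) (d : ℕ) (b x v : ι → R) :
    weylPhase d a b (x + m • v) = weylPhase d a b x + m * ∑ i, b i * v i := by
  simp only [weylPhase, sum_sq_add_smul, mul_add_mul_pow_of_mul_eq_zero ham]
  simp only [Pi.add_apply, Pi.smul_apply, smul_eq_mul, mul_add, sum_add_distrib, mul_sum]
  simp only [mul_left_comm (b _) m, add_assoc]

end Phase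

theorem Equiv.sum_eq_zero_of_comp_eq_mul {α R : Type*} [Fintype α] [CommRing R] [IsDomain R]
    (e : α ≃ α) {f : α → R} {c : R} (hc : c ≠ 1) (h : ∀ x, f (e x) = c * f x) :
    ∑ x, f x = 0 := by
  have hS : c * ∑ x, f x = ∑ x, f x := by
    simp only [mul_sum, ← h, e.sum_comp f]
  have : (c - 1) * ∑ x, f x = 0 := by rw [sub_mul, hS, one_mul, sub_self]
  exact (mul_eq_zero.mp this).resolve_left (sub_ne_zero.mpr hc)

theorem sum_addChar_weylPhase_eq_zero {R M ι : Type*} [CommRing R] [Fintype R] [CommRing M]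
    [IsDomain M] [Fintype ι] [DecidableEq ι] {ψ : AddChar R M} (hψ : Function.Injective ψ)
    (d : ℕ) {a m : R} (ham : a * m = 0) {b : ι → R} {i₀ : ι} (hmb : m * b i₀ ≠ 0) :
    ∑ x, ψ (weylPhase d a b x) = 0 := by
  refine (Equiv.addRight (m • Pi.single i₀ 1)).sum_eq_zero_of_comp_eq_mul
    (c := ψ (m * b i₀)) ?_ fun x => ?_
  · rwa [← ψ.map_zero_eq_one, hψ.ne_iff]
  · simp [weylPhase_add_smul ham, AddChar.map_add_eq_mul, Pi.single_apply, mul_comm]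

theorem exists_not_dvd_of_gcd_eq_one {ι : Type*} [Fintype ι] {a c : ℤ} {b : ι → ℤ} {v : ℕ}
    (h : Int.gcd a (Int.gcd (univ.gcd b) c) = 1) (hv : 1 < v) (hva : (v : ℤ) ∣ a)
    (hvc : (v : ℤ) ∣ c) : ∃ i, ¬ (v : ℤ) ∣ b i := by
  by_contra! hb
  have hv1 := Int.dvd_coe_gcd hva (Int.dvd_coe_gcd (Finset.dvd_gcd (s := univ) fun i _ => hb i) hvc)
  rw [h, Nat.cast_one] at hv1
  have := Int.eq_one_of_dvd_one (Int.natCast_nonneg v) hv1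
  omega

theorem sum_exp_eq_sum_stdAddChar_weylPhase {ι : Type*} [Fintype ι] [DecidableEq ι]
    (d q : ℕ) [NeZero q] (a : ℤ) (b : ι → ℤ) :
    ∑ r : ι → Fin q, Complex.exp (2 * Real.pi * Complex.I *
        (((a:ℂ)/(q:ℂ)) * (∑ i, ((r i : ℕ) : ℂ)^2)^d + ∑ i, ((b i : ℂ)/(q:ℂ)) * ((r i : ℕ) : ℂ)))
      = ∑ x : ι → ZMod q,
          ZMod.stdAddChar (weylPhase d (a : ZMod q) (fun i => (b i : ZMod q)) x) := by
  refine Fintype.sum_equiv (.piCongrRight fun _ => (ZMod.finEquiv q).toEquiv) _ _ fun r => ?_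
  have hcast : ∀ j : Fin q, ZMod.finEquiv q j = ((j : ℕ) : ZMod q) := by
    obtain ⟨k, rfl⟩ := Nat.exists_eq_succ_of_ne_zero (NeZero.ne q)
    exact fun j => (Fin.cast_val_eq_self j).symm
  have hphase : weylPhase d (a : ZMod q) (fun i => (b i : ZMod q))
      ((Equiv.piCongrRight fun _ => (ZMod.finEquiv q).toEquiv) r)
      = ((weylPhase d a b fun i => ((r i : ℕ) : ℤ) : ℤ) : ZMod q) := by
    simp [weylPhase, hcast]
  rw [hphase, ZMod.stdAddChar_coe]
  congr 1
  simp only [weylPhase]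
  push_cast
  rw [mul_div_assoc, add_div, sum_div]
  simp only [div_mul_eq_mul_div]

theorem stmt1_general (n d q : ℕ) (hq : 0 < q)
    (a : ℤ) (b : Fin n → ℤ)
    (hcop : Int.gcd a ((Int.gcd (Finset.univ.gcd b) (q:ℤ) : ℕ) : ℤ) = 1)
    (hnotcop : 1 < Int.gcd a (q:ℤ)) :
    (1/(q:ℂ)^n) * ∑ r : Fin n → Fin q,
      Complex.exp (2*Real.pi*Complex.I *
        (((a:ℂ)/(q:ℂ)) * (∑ i, ((r i : ℕ) : ℂ)^2)^d
          + ∑ i, ((b i : ℂ)/(q:ℂ)) * ((r i : ℕ) : ℂ))) = 0 := by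
  have : NeZero q := ⟨hq.ne'⟩
  have hva := Int.gcd_dvd_left a q
  obtain ⟨q', hq'⟩ := Int.gcd_dvd_right a q
  obtain ⟨i₀, hb⟩ := exists_not_dvd_of_gcd_eq_one hcop hnotcop hva ⟨q', hq'⟩
  have hq'0 : q' ≠ 0 := by rintro rfl; omega
  rw [sum_exp_eq_sum_stdAddChar_weylPhase]
  refine mul_eq_zero_of_right _ <| sum_addChar_weylPhase_eq_zero ZMod.injective_stdAddChar d
    (m := (q' : ZMod q)) (i₀ := i₀) ?_ ?_
  · rw [← Int.cast_mul, ZMod.intCast_zmod_eq_zero_iff_dvd, hq']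
    exact mul_dvd_mul_right hva q'
  · rw [← Int.cast_mul, ne_eq, ZMod.intCast_zmod_eq_zero_iff_dvd, hq', mul_comm _ q',
      mul_dvd_mul_iff_left hq'0]
    exact hb

/-- Vanishing of the complete exponential sum `S(a/q, b/q)` when
`gcd(a, b₁, …, bₙ, q) = 1` but `gcd(a, q) > 1`. -/
theorem stmt1 (n d q : ℕ) (hn : 0 < n) (hd : 0 < d) (hq : 0 < q)
    (a : ℤ) (b : Fin n → ℤ)
    (hcop : Int.gcd a ((Int.gcd (Finset.univ.gcd b) (q:ℤ) : ℕ) : ℤ) = 1)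
    (hnotcop : 1 < Int.gcd a (q:ℤ)) :
    (1/(q:ℂ)^n) * ∑ r : Fin n → Fin q,
      Complex.exp (2*Real.pi*Complex.I *
        (((a:ℂ)/(q:ℂ)) * (∑ i, ((r i : ℕ) : ℂ)^2)^d
          + ∑ i, ((b i : ℂ)/(q:ℂ)) * ((r i : ℕ) : ℂ))) = 0 :=
  stmt1_general n d q hq a b hcop hnotcop
end

section
/- Let q be a positive integer, c ∈ ℝ with 0 < c, and define E = { w ∈ ℤ : gcd(2d·w, q) ≥ q^{c} } for a fixed positive integer d (assume q^c ≥ 1). Then for every z ∈ ℤ and every integer N ≥ q, |E ∩ (z + [0,N) ∩ ℤ)| ≤ C_ε · N · q^{-c + ε} for every ε > 0, where C_ε depends only on ε and d. -/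
/-!
If `gcd(2dw, q) = ν ≥ q^c`, then `ν ∣ 2dw`, so `w` is a multiple of `ν / gcd(ν, 2d) ≥ ν / (2d)`.
An interval of length `N ≥ q ≥ ν` contains at most `(2d + 1) N / ν ≤ (2d + 1) N q^(-c)` such
multiples, and summing over the at most `τ(q) ≪_ε q^ε` divisors `ν` of `q` gives the bound.
-/

open Finset

theorem Real.natCast_add_one_le_rpow_mul {x ε : ℝ} (hx : 0 ≤ x) (hxε : 2 ≤ x ^ ε) (a : ℕ) :
    (a : ℝ) + 1 ≤ x ^ (a * ε) := by
  calc (a : ℝ) + 1 ≤ 2 ^ a := by exact_mod_cast Nat.lt_two_pow_self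
    _ ≤ (x ^ ε) ^ a := by gcongr
    _ = x ^ (a * ε) := by rw [mul_comm, Real.rpow_mul hx, Real.rpow_natCast]

theorem Real.natCast_add_one_le_mul_rpow_mul {x ε : ℝ} (hx : 2 ≤ x) (hε : 0 < ε) (a : ℕ) :
    (a : ℝ) + 1 ≤ max 1 (ε * Real.log 2)⁻¹ * x ^ (a * ε) := by
  set M := max 1 (ε * Real.log 2)⁻¹
  have hlog : 0 < ε * Real.log 2 := mul_pos hε (Real.log_pos one_lt_two)
  have hM : 1 ≤ M * (ε * Real.log 2) := by
    rw [← inv_mul_cancel₀ hlog.ne']; gcongr; exact le_max_right _ _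
  have hexp : 1 + a * ε * Real.log 2 ≤ x ^ (a * ε) :=
    calc 1 + a * ε * Real.log 2 ≤ Real.exp (Real.log 2 * (a * ε)) := by
          linarith [Real.add_one_le_exp (Real.log 2 * (a * ε))]
      _ = 2 ^ (a * ε) := by rw [Real.rpow_def_of_pos two_pos]
      _ ≤ x ^ (a * ε) := by gcongr
  have ha : (0 : ℝ) ≤ a := a.cast_nonneg
  calc (a : ℝ) + 1 ≤ M * (1 + a * ε * Real.log 2) := by
        nlinarith [le_max_left 1 (ε * Real.log 2)⁻¹]
    _ ≤ M * x ^ (a * ε) := by gcongr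

theorem Nat.rpow_eq_prod_primeFactors {n : ℕ} (hn : n ≠ 0) (ε : ℝ) :
    (n : ℝ) ^ ε = ∏ p ∈ n.primeFactors, (p : ℝ) ^ (n.factorization p * ε) := by
  conv_lhs => rw [← Nat.prod_factorization_pow_eq_self hn]
  rw [Nat.prod_factorization_eq_prod_primeFactors, Nat.cast_prod,
    ← Real.finsetProd_rpow _ _ fun p _ => by positivity]
  refine prod_congr rfl fun p _ => ?_
  rw [Nat.cast_pow, ← Real.rpow_natCast, ← Real.rpow_mul p.cast_nonneg]

theorem Nat.card_divisors_le_mul_rpow {ε : ℝ} (hε : 0 < ε) :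
    ∃ C > 0, ∀ n : ℕ, (#n.divisors : ℝ) ≤ C * n ^ ε := by
  set M : ℝ := max 1 (ε * Real.log 2)⁻¹
  set y : ℝ := 2 ^ ε⁻¹
  have hM : 1 ≤ M := le_max_left _ _
  refine ⟨M ^ ⌈y⌉₊, by positivity, fun n => ?_⟩
  rcases eq_or_ne n 0 with rfl | hn
  · simp [Real.zero_rpow hε.ne']
  -- only primes below `y = 2^(1/ε)` contribute a factor larger than `p^(aε)` to `τ(p^a)`
  have hprime : ∀ p ∈ n.primeFactors, (n.factorization p : ℝ) + 1 ≤
      (if (p : ℝ) < y then M else 1) * (p : ℝ) ^ (n.factorization p * ε) := by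
    intro p hp
    have hp : (2 : ℝ) ≤ p := by exact_mod_cast (Nat.prime_of_mem_primeFactors hp).two_le
    split_ifs with hpy
    · exact Real.natCast_add_one_le_mul_rpow_mul hp hε _
    · rw [one_mul]
      refine Real.natCast_add_one_le_rpow_mul (by positivity) ?_ _
      calc (2 : ℝ) = y ^ ε := by
            rw [← Real.rpow_mul zero_le_two, inv_mul_cancel₀ hε.ne', Real.rpow_one]
        _ ≤ (p : ℝ) ^ ε := by gcongr; exact not_lt.mp hpy
  have hsmall : ∏ p ∈ n.primeFactors, (if (p : ℝ) < y then M else 1) ≤ M ^ ⌈y⌉₊ := by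
    rw [prod_ite, prod_const, prod_const, one_pow, mul_one]
    refine pow_le_pow_right₀ hM ((card_le_card fun p hp => ?_).trans (card_range _).le)
    rw [mem_filter] at hp
    exact mem_range.mpr (by exact_mod_cast hp.2.trans_le (Nat.le_ceil y))
  calc (#n.divisors : ℝ) = ∏ p ∈ n.primeFactors, ((n.factorization p : ℝ) + 1) := by
        rw [Nat.card_divisors hn]; push_cast; rfl
    _ ≤ ∏ p ∈ n.primeFactors,
          (if (p : ℝ) < y then M else 1) * (p : ℝ) ^ (n.factorization p * ε) :=
        prod_le_prod (fun _ _ => by positivity) hprime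
    _ ≤ M ^ ⌈y⌉₊ * n ^ ε := by
        rw [prod_mul_distrib, ← Nat.rpow_eq_prod_primeFactors hn]
        gcongr

theorem Int.card_Ico_filter_dvd_le {m : ℤ} (hm : 0 < m) {a b : ℤ} (hab : a ≤ b) :
    (#{x ∈ Ico a b | m ∣ x} : ℝ) ≤ (b - a) / m + 1 := by
  have hm' : (0 : ℚ) < m := by exact_mod_cast hm
  have hab' : (a : ℚ) / m ≤ b / m := by gcongr
  have hb := Int.ceil_lt_add_one ((b : ℚ) / m)
  have ha := Int.le_ceil ((a : ℚ) / m)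
  have key : ((#{x ∈ Ico a b | m ∣ x} : ℤ) : ℚ) ≤ ((b : ℚ) - a) / m + 1 := by
    rw [Int.Ico_filter_dvd_card a b hm, sub_div]
    push_cast
    exact max_le (by linarith) (by linarith)
  exact_mod_cast (Rat.cast_le (K := ℝ)).mpr key

theorem Int.div_gcd_dvd_of_dvd_mul {ν k w : ℤ} (hν : ν ≠ 0) (h : ν ∣ k * w) :
    ν / ν.gcd k ∣ w := by
  rw [Int.div_dvd_iff_dvd_mul (Int.gcd_dvd_left ν k) (by simp [hν]), Int.coe_gcd]
  exact dvd_gcd_mul_iff_dvd_mul.mpr h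

theorem Int.card_Ico_filter_dvd_mul_le {k ν : ℤ} (hk : 0 < k) (hν : 0 < ν) (z : ℤ) (N : ℕ) :
    (#{w ∈ Ico z (z + N) | ν ∣ k * w} : ℝ) ≤ k * N / ν + 1 := by
  set g : ℤ := (ν.gcd k : ℤ)
  set m : ℤ := ν / g
  have hg : 0 < g := by simp [g, Int.gcd_pos_iff, hν.ne']
  have hmg : (ν : ℝ) = m * g := by
    exact_mod_cast (Int.ediv_mul_cancel (Int.gcd_dvd_left ν k)).symm
  have hm : 0 < m := Int.ediv_pos_of_pos_of_dvd hν hg.le (Int.gcd_dvd_left ν k)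
  have hsub : {w ∈ Ico z (z + N) | ν ∣ k * w} ⊆ {w ∈ Ico z (z + N) | m ∣ w} :=
    monotone_filter_right _ fun _ _ => Int.div_gcd_dvd_of_dvd_mul hν.ne'
  have hgk : (g : ℝ) ≤ k := by exact_mod_cast Int.gcd_le_right ν hk
  calc (#{w ∈ Ico z (z + N) | ν ∣ k * w} : ℝ)
      ≤ #{w ∈ Ico z (z + N) | m ∣ w} := by exact_mod_cast card_le_card hsub
    _ ≤ (((z + N : ℤ) : ℝ) - z) / m + 1 := Int.card_Ico_filter_dvd_le hm (by omega : z ≤ z + N)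
    _ = g * N / ν + 1 := by
        have : (m : ℝ) ≠ 0 := by exact_mod_cast hm.ne'
        have : (g : ℝ) ≠ 0 := by exact_mod_cast hg.ne'
        rw [hmg]; push_cast; field_simp; ring
    _ ≤ k * N / ν + 1 := by gcongr

theorem Int.card_Ico_filter_dvd_mul_le_of_le {k ν : ℤ} (hk : 0 < k) (hν : 0 < ν) (z : ℤ)
    {N : ℕ} (hνN : ν ≤ N) :
    (#{w ∈ Ico z (z + N) | ν ∣ k * w} : ℝ) ≤ (k + 1) * N / ν := by
  have hν' : (0 : ℝ) < ν := by exact_mod_cast hν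
  have hνN' : (1 : ℝ) ≤ N / ν := by rw [one_le_div hν']; exact_mod_cast hνN
  calc (#{w ∈ Ico z (z + N) | ν ∣ k * w} : ℝ) ≤ k * N / ν + 1 :=
        Int.card_Ico_filter_dvd_mul_le hk hν z N
    _ ≤ k * N / ν + N / ν := by gcongr
    _ = (k + 1) * N / ν := by ring

theorem card_Ico_filter_le_gcd_mul_le {k : ℤ} (hk : 0 < k) {q : ℕ} (hq : 0 < q) {T : ℝ}
    (hT : 0 < T) (z : ℤ) {N : ℕ} (hqN : q ≤ N) :
    (#{w ∈ Ico z (z + N) | T ≤ Int.gcd (k * w) q} : ℝ) ≤ #q.divisors * ((k + 1) * N / T) := by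
  set D : Finset ℕ := {ν ∈ q.divisors | T ≤ ν}
  have hcover : {w ∈ Ico z (z + N) | T ≤ Int.gcd (k * w) q} ⊆
      D.biUnion fun ν => {w ∈ Ico z (z + N) | (ν : ℤ) ∣ k * w} := by
    intro w hw
    rw [mem_filter] at hw
    have hgq : Int.gcd (k * w) q ∣ q := by simpa using Int.gcd_dvd_natAbs_right (k * w) q
    refine mem_biUnion.mpr ⟨Int.gcd (k * w) q, ?_, mem_filter.mpr ⟨hw.1, Int.gcd_dvd_left _ _⟩⟩
    exact mem_filter.mpr ⟨Nat.mem_divisors.mpr ⟨hgq, hq.ne'⟩, hw.2⟩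
  have hfiber : ∀ ν ∈ D, (#{w ∈ Ico z (z + N) | (ν : ℤ) ∣ k * w} : ℝ) ≤ (k + 1) * N / T := by
    intro ν hν
    obtain ⟨hνq, hTν⟩ := mem_filter.mp hν
    have hν0 : 0 < ν := Nat.pos_of_mem_divisors hνq
    have hνN : ν ≤ N := (Nat.divisor_le hνq).trans hqN
    calc (#{w ∈ Ico z (z + N) | (ν : ℤ) ∣ k * w} : ℝ) ≤ (k + 1) * N / ((ν : ℤ) : ℝ) :=
          Int.card_Ico_filter_dvd_mul_le_of_le hk (by exact_mod_cast hν0) z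
            (by exact_mod_cast hνN)
      _ ≤ (k + 1) * N / T := by
          rw [Int.cast_natCast]
          gcongr
  calc _ ≤ (#(D.biUnion fun ν => {w ∈ Ico z (z + N) | (ν : ℤ) ∣ k * w}) : ℝ) := by
        exact_mod_cast card_le_card hcover
    _ ≤ ∑ ν ∈ D, (#{w ∈ Ico z (z + N) | (ν : ℤ) ∣ k * w} : ℝ) := by
        exact_mod_cast card_biUnion_le
    _ ≤ #D * ((k + 1) * N / T) := by
        simpa using sum_le_sum hfiber
    _ ≤ #q.divisors * ((k + 1) * N / T) := by
        gcongr
        exact fun ν hν => (mem_filter.mp hν).1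

/-- Density bound for the exceptional set `{w : gcd(2dw, q) ≥ q^c}`: in any
integer interval of length `N ≥ q` it has at most `C_ε · N · q^{-c+ε}`
elements, where `C_ε` depends only on `ε` and `d`. -/
theorem stmt11 (d : ℕ) (hd : 0 < d) :
    ∀ ε : ℝ, 0 < ε → ∃ C : ℝ, 0 < C ∧
      ∀ (q : ℕ) (c : ℝ), 0 < q → 0 < c →
      ∀ (z : ℤ) (N : ℕ), q ≤ N →
      (((Finset.Ico z (z + (N:ℤ))).filter
          (fun w => ((q:ℝ))^c ≤ (Int.gcd (2*(d:ℤ)*w) (q:ℤ) : ℝ))).card : ℝ)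
        ≤ C * (N:ℝ) * (q:ℝ)^(-c+ε) := by
  intro ε hε
  obtain ⟨C, hC, hτ⟩ := Nat.card_divisors_le_mul_rpow hε
  refine ⟨(2 * d + 1) * C, by positivity, fun q c hq _ z N hqN => ?_⟩
  have hqR : (0 : ℝ) < q := by exact_mod_cast hq
  calc _ ≤ #q.divisors * ((((2 * d : ℤ) : ℝ) + 1) * N / (q : ℝ) ^ c) :=
        card_Ico_filter_le_gcd_mul_le (by positivity) hq (by positivity) z hqN
    _ ≤ C * q ^ ε * ((2 * d + 1) * N / q ^ c) := by
        push_cast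
        gcongr
        exact hτ q
    _ = (2 * d + 1) * C * N * q ^ (-c + ε) := by
        rw [Real.rpow_add hqR, Real.rpow_neg hqR.le]; ring
end

section
/- Let a, q, a', q' be integers with q, q' ≥ 1, and let q_♭ = gcd(q,q'), w ∈ ℤⁿ, d ≥ 1. Then ∑_{b ∈ [0,q_♭)ⁿ ∩ ℤⁿ} S(a/q, b/q_♭) · conj(S(a'/q', b/q_♭)) · e(w · b/q_♭) = (q_♭/q')ⁿ ∑_{u ∈ [0, q'/q_♭)ⁿ ∩ ℤⁿ} q^{-n} ∑_{r ∈ [0,q)ⁿ ∩ ℤⁿ} e( (a/q)|r|^{2d} − (a'/q')|r + w + q_♭·u|^{2d} ), where S(α, β) = q^{-n} ∑_{r ∈ [0,q)ⁿ} e(α|r|^{2d} + β·r) for β with denominator dividing q, and e(x) = exp(2πix). -/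
/-!
Expanding both exponential sums, the sum over `b` becomes a complete character sum over
`(ℤ/q♭)ⁿ`, which vanishes unless `r' ≡ r + w (mod q♭)`. The residues `r' ∈ [0,q')ⁿ` in that
class are exactly the reductions mod `q'` of `r + w + q♭ u`, `u ∈ [0, q'/q♭)ⁿ`, and the phase
`e(-(a'/q') |r'|^{2d})` only depends on `r'` mod `q'`, so the reduction can be dropped.
-/

open Complex Finset
-- `Fin.IntCast` makes `((x : ℤ) : Fin N)` the residue of `x` mod `N`.
open scoped Real ComplexConjugate Fin.IntCast

lemma exp_two_pi_I_mul_add_intCast (x : ℂ) (m : ℤ) :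
    exp (2 * π * I * (x + m)) = exp (2 * π * I * x) := by
  rw [mul_add, exp_add, mul_comm _ (m : ℂ), exp_int_mul_two_pi_mul_I, mul_one]

lemma conj_exp_two_pi_I_mul (x : ℂ) : conj (exp (2 * π * I * x)) = exp (2 * π * I * -conj x) := by
  rw [← exp_conj]
  simp only [map_mul, map_ofNat, conj_ofReal, conj_I]
  ring_nf

lemma mul_sum_exp_two_pi_I_mul_add {α : Type*} (s : Finset α) (c : ℂ) (A B : α → ℂ) :
    c * ∑ r ∈ s, exp (2 * π * I * (A r + B r))
      = ∑ r ∈ s, c * exp (2 * π * I * A r) * exp (2 * π * I * B r) := by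
  rw [mul_sum]
  refine sum_congr rfl fun r _ => ?_
  rw [mul_add, exp_add, ← mul_assoc]

lemma exp_two_pi_I_mul_div_mul_congr (c : ℤ) {N : ℕ} {k l : ℤ} (h : k ≡ l [ZMOD N]) :
    exp (2 * π * I * (c / N * k)) = exp (2 * π * I * (c / N * l)) := by
  obtain ⟨t, ht⟩ := Int.modEq_iff_dvd.1 h
  rcases eq_or_ne N 0 with rfl | hN
  · simp
  · have hl : (c / N * l : ℂ) = c / N * k + (c * t : ℤ) := by
      rw [show l = k + N * t by omega]; push_cast; field_simp
    rw [hl, exp_two_pi_I_mul_add_intCast]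

lemma exp_two_pi_I_mul_div_mul_sum_sq_pow_congr {ι : Type*} [Fintype ι] (c : ℤ) {N : ℕ} (d : ℕ)
    {x y : ι → ℤ} (h : ∀ i, x i ≡ y i [ZMOD N]) :
    exp (2 * π * I * (c / N * (∑ i, (x i : ℂ) ^ 2) ^ d))
      = exp (2 * π * I * (c / N * (∑ i, (y i : ℂ) ^ 2) ^ d)) := by
  have hxy : (∑ i, x i ^ 2) ^ d ≡ (∑ i, y i ^ 2) ^ d [ZMOD N] := by gcongr with i; exact h i
  exact_mod_cast exp_two_pi_I_mul_div_mul_congr c hxy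

lemma sum_fin_exp_two_pi_I_div_mul {g : ℕ} (hg : g ≠ 0) (m : ℤ) :
    ∑ b : Fin g, exp (2 * π * I * (((b : ℕ) : ℂ) / g * m)) = if (g : ℤ) ∣ m then (g : ℂ) else 0 := by
  have hζ := Complex.isPrimitiveRoot_exp g hg
  have hz : ∀ b : ℕ, exp (2 * π * I * ((b : ℂ) / g * m)) = (exp (2 * π * I / g) ^ m) ^ b := by
    intro b; rw [← exp_int_mul, ← exp_nat_mul]; congr 1; ring
  set z := exp (2 * π * I / g) ^ m
  simp only [hz, Fin.sum_univ_eq_sum_range (fun b => z ^ b)]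
  split_ifs with hdvd
  · simp [z, (hζ.zpow_eq_one_iff_dvd m).2 hdvd]
  · have hz1 : z ≠ 1 := mt (hζ.zpow_eq_one_iff_dvd m).1 hdvd
    have hzg : z ^ g = 1 := by
      rw [← zpow_natCast, ← zpow_mul, mul_comm m, zpow_mul, zpow_natCast, hζ.pow_eq_one, one_zpow]
    rw [geom_sum_eq hz1, hzg, sub_self, zero_div]

lemma sum_pi_exp_two_pi_I_sum_div_mul {ι : Type*} [Fintype ι] [DecidableEq ι] {g : ℕ} (hg : g ≠ 0)
    (m : ι → ℤ) :
    ∑ b : ι → Fin g, exp (2 * π * I * ∑ i, ((b i : ℕ) : ℂ) / g * m i)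
      = if ∀ i, (g : ℤ) ∣ m i then (g : ℂ) ^ Fintype.card ι else 0 := by
  simp only [Finset.mul_sum, Complex.exp_sum]
  rw [← Fintype.prod_sum (fun i (c : Fin g) => exp (2 * π * I * (((c : ℕ) : ℂ) / g * m i)))]
  simp only [sum_fin_exp_two_pi_I_div_mul hg, Fintype.prod_ite_zero, prod_const, card_univ]

lemma sum_expSum_mul_conj_expSum_mul_exp {ι : Type*} [Fintype ι] [DecidableEq ι] {g N N' : ℕ}
    (hg : g ≠ 0) (f : (ι → Fin N) → ℂ) (h : (ι → Fin N') → ℂ) (w : ι → ℤ) :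
    ∑ b : ι → Fin g,
      (∑ r, f r * exp (2 * π * I * ∑ i, ((b i : ℕ) : ℂ) / g * (r i : ℕ)))
      * conj (∑ r', h r' * exp (2 * π * I * ∑ i, ((b i : ℕ) : ℂ) / g * (r' i : ℕ)))
      * exp (2 * π * I * ∑ i, (w i : ℂ) * ((b i : ℕ) / g))
    = (g : ℂ) ^ Fintype.card ι * ∑ r, f r * ∑ r',
        if ∀ i, (g : ℤ) ∣ (r i : ℕ) + w i - (r' i : ℕ) then conj (h r') else 0 := by
  have hphase : ∀ (b : ι → Fin g) (r : ι → Fin N) (r' : ι → Fin N'),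
      exp (2 * π * I * ∑ i, ((b i : ℕ) : ℂ) / g * (r i : ℕ))
        * conj (exp (2 * π * I * ∑ i, ((b i : ℕ) : ℂ) / g * (r' i : ℕ)))
        * exp (2 * π * I * ∑ i, (w i : ℂ) * ((b i : ℕ) / g))
      = exp (2 * π * I * ∑ i, ((b i : ℕ) : ℂ) / g * (((r i : ℕ) + w i - (r' i : ℕ) : ℤ) : ℂ)) := by
    intro b r r'
    rw [← exp_conj, ← exp_add, ← exp_add]
    congr 1
    simp only [map_mul, map_sum, map_div₀, map_natCast, map_ofNat, conj_ofReal, conj_I]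
    simp only [Finset.mul_sum, ← Finset.sum_add_distrib]
    refine sum_congr rfl fun i _ => ?_
    push_cast
    ring
  calc _ = ∑ b : ι → Fin g, ∑ r, ∑ r', f r * conj (h r') *
        exp (2 * π * I * ∑ i, ((b i : ℕ) : ℂ) / g * (((r i : ℕ) + w i - (r' i : ℕ) : ℤ) : ℂ)) := by
        refine sum_congr rfl fun b _ => ?_
        rw [map_sum, sum_mul_sum, sum_mul]
        refine sum_congr rfl fun r _ => ?_
        rw [sum_mul]
        refine sum_congr rfl fun r' _ => ?_
        rw [← hphase, map_mul]
        ring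
    _ = ∑ r, ∑ r', (∑ b : ι → Fin g,
          exp (2 * π * I * ∑ i, ((b i : ℕ) : ℂ) / g * (((r i : ℕ) + w i - (r' i : ℕ) : ℤ) : ℂ)))
          * (f r * conj (h r')) := by
        rw [sum_comm]
        refine sum_congr rfl fun r _ => ?_
        rw [sum_comm]
        refine sum_congr rfl fun r' _ => ?_
        rw [sum_mul]
        exact sum_congr rfl fun _ _ => mul_comm _ _
    _ = _ := by
        simp only [sum_pi_exp_two_pi_I_sum_div_mul hg]
        simp only [ite_mul, zero_mul, Finset.mul_sum, mul_ite, mul_zero]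

lemma Fin.natCast_val_intCast {N : ℕ} [NeZero N] (x : ℤ) : (((x : Fin N) : ℕ) : ℤ) = x % N := by
  rw [Fin.val_intCast, Int.toNat_of_nonneg (Int.emod_nonneg _ (by simp [NeZero.ne]))]

section Reparametrization

variable {g k : ℕ} [NeZero (g * k)]

lemma dvd_sub_val_intCast_add_mul (v : ℤ) (u : ℕ) :
    (g : ℤ) ∣ v - (((v + g * u : ℤ) : Fin (g * k)) : ℕ) := by
  refine Int.ModEq.dvd ?_
  rw [Fin.natCast_val_intCast, Int.ModEq, Nat.cast_mul,
    Int.emod_emod_of_dvd _ (dvd_mul_right _ _), Int.add_mul_emod_self_left]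

lemma intCast_add_mul_injective (v : ℤ) :
    Function.Injective fun u : Fin k => ((v + g * (u : ℕ) : ℤ) : Fin (g * k)) := by
  intro u u' huu'
  have hg : (g : ℤ) ≠ 0 := by exact_mod_cast left_ne_zero_of_mul (NeZero.ne (g * k))
  have h := congrArg (fun x : Fin (g * k) => ((x : ℕ) : ℤ)) huu'
  simp only [Fin.natCast_val_intCast] at h
  have hmod : ((u : ℕ) : ℤ) ≡ (u' : ℕ) [ZMOD k] :=
    Int.ModEq.mul_left_cancel' hg (Int.ModEq.add_left_cancel' v (by exact_mod_cast h))
  exact Fin.ext (Nat.ModEq.eq_of_lt_of_lt (Int.natCast_modEq_iff.1 hmod) u.isLt u'.isLt)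

lemma exists_intCast_add_mul_eq {v : ℤ} {r : Fin (g * k)} (hr : (g : ℤ) ∣ v - (r : ℕ)) :
    ∃ u : Fin k, ((v + g * (u : ℕ) : ℤ) : Fin (g * k)) = r := by
  obtain ⟨t, ht⟩ := hr
  have : NeZero k := ⟨right_ne_zero_of_mul (NeZero.ne (g * k))⟩
  refine ⟨((-t : ℤ) : Fin k), Fin.ext (Nat.cast_injective (R := ℤ) ?_)⟩
  have hcong : v + g * ((-t) % k) ≡ ((r : ℕ) : ℤ) [ZMOD (g * k : ℕ)] := by
    have := ((Int.mod_modEq (-t) k).mul_left' (c := g)).add_left v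
    rw [show v + g * -t = r by linarith] at this
    exact_mod_cast this
  rw [Fin.natCast_val_intCast, Fin.natCast_val_intCast, hcong,
    Int.emod_eq_of_lt (by positivity) (by exact_mod_cast r.isLt)]

end Reparametrization

lemma sum_ite_dvd_sub_eq_sum_add_mul {M ι : Type*} [AddCommMonoid M] [Fintype ι] [DecidableEq ι]
    {N g : ℕ} [NeZero N] (hgN : g ∣ N) (F : (ι → ℤ) → M)
    (hF : ∀ x y, (∀ i, x i ≡ y i [ZMOD N]) → F x = F y) (v : ι → ℤ) :
    ∑ r : ι → Fin N, (if ∀ i, (g : ℤ) ∣ v i - (r i : ℕ) then F (fun i => (r i : ℕ)) else 0)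
      = ∑ u : ι → Fin (N / g), F (fun i => v i + g * (u i : ℕ)) := by
  obtain ⟨k, rfl⟩ := hgN
  rw [Nat.mul_div_cancel_left k (Nat.pos_of_ne_zero (left_ne_zero_of_mul (NeZero.ne (g * k)))),
    ← sum_filter, eq_comm]
  refine sum_nbij (fun u i => ((v i + g * (u i : ℕ) : ℤ) : Fin (g * k))) ?_ ?_ ?_ ?_
  · intro u _
    simpa only [mem_filter, mem_univ, true_and] using fun i => dvd_sub_val_intCast_add_mul (v i) _
  · intro u _ u' _ huu'
    exact funext fun i => intCast_add_mul_injective (v i) (congrFun huu' i)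
  · intro r hr
    simp only [coe_filter, mem_univ, true_and] at hr
    choose u hu using fun i => exists_intCast_add_mul_eq (hr i)
    exact ⟨u, mem_coe.2 (mem_univ _), funext hu⟩
  · intro u _
    refine hF _ _ fun i => ?_
    rw [Fin.natCast_val_intCast]
    exact (Int.mod_modEq _ _).symm

lemma sum_ite_dvd_sub_conj_mul_exp_sum_sq_pow {ι : Type*} [Fintype ι] [DecidableEq ι] {N g : ℕ}
    [NeZero N] (hgN : g ∣ N) (c : ℂ) (a : ℤ) (d : ℕ) (v : ι → ℤ) :
    ∑ r : ι → Fin N, (if ∀ i, (g : ℤ) ∣ v i - (r i : ℕ) then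
        conj (c * exp (2 * π * I * (a / N * (∑ i, ((r i : ℕ) : ℂ) ^ 2) ^ d))) else 0)
      = ∑ u : ι → Fin (N / g),
          conj (c * exp (2 * π * I * (a / N * (∑ i, ((v i : ℂ) + g * (u i : ℕ)) ^ 2) ^ d))) := by
  have h := sum_ite_dvd_sub_eq_sum_add_mul hgN
    (fun x => conj (c * exp (2 * π * I * (a / N * (∑ i, (x i : ℂ) ^ 2) ^ d))))
    (fun x y hxy => by simp only [exp_two_pi_I_mul_div_mul_sum_sq_pow_congr a d hxy]) v
  convert h using 1 <;> simp only [Int.cast_natCast, Int.cast_add, Int.cast_mul]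

theorem stmt18_general (n d q q' : ℕ)
    (hq : 0 < q) (hq' : 0 < q') (a a' : ℤ) (w : Fin n → ℤ) :
    (∑ b : Fin n → Fin (Nat.gcd q q'),
      ((1/(q:ℂ)^n) * ∑ r : Fin n → Fin q,
        Complex.exp (2*Real.pi*Complex.I *
          (((a:ℂ)/(q:ℂ)) * (∑ i, ((r i : ℕ) : ℂ)^2)^d
            + ∑ i, (((b i : ℕ) : ℂ)/((Nat.gcd q q' : ℕ) : ℂ)) * ((r i : ℕ) : ℂ))))
      * (starRingEnd ℂ) ((1/(q':ℂ)^n) * ∑ r' : Fin n → Fin q',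
          Complex.exp (2*Real.pi*Complex.I *
            (((a':ℂ)/(q':ℂ)) * (∑ i, ((r' i : ℕ) : ℂ)^2)^d
              + ∑ i, (((b i : ℕ) : ℂ)/((Nat.gcd q q' : ℕ) : ℂ)) * ((r' i : ℕ) : ℂ))))
      * Complex.exp (2*Real.pi*Complex.I *
          (∑ i, (w i : ℂ) * (((b i : ℕ) : ℂ)/((Nat.gcd q q' : ℕ) : ℂ)))))
    = (((Nat.gcd q q' : ℕ) : ℂ)/(q':ℂ))^n *
      ∑ u : Fin n → Fin (q' / Nat.gcd q q'),
        (1/(q:ℂ)^n) * ∑ r : Fin n → Fin q,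
          Complex.exp (2*Real.pi*Complex.I *
            (((a:ℂ)/(q:ℂ)) * (∑ i, ((r i : ℕ) : ℂ)^2)^d
              - ((a':ℂ)/(q':ℂ)) *
                (∑ i, (((r i : ℕ) : ℂ) + (w i : ℂ)
                  + ((Nat.gcd q q' : ℕ) : ℂ) * ((u i : ℕ) : ℂ))^2)^d)) := by
  have : NeZero q' := ⟨hq'.ne'⟩
  simp only [mul_sum_exp_two_pi_I_mul_add]
  rw [sum_expSum_mul_conj_expSum_mul_exp (Nat.gcd_pos_of_pos_left q' hq).ne', Fintype.card_fin]
  simp only [sum_ite_dvd_sub_conj_mul_exp_sum_sq_pow (Nat.gcd_dvd_right q q')]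
  simp only [map_mul, conj_exp_two_pi_I_mul, map_div₀, map_one, map_pow, map_natCast, map_sum,
    map_add, map_intCast, Int.cast_add, Int.cast_natCast, Finset.mul_sum]
  rw [sum_comm]
  refine sum_congr rfl fun u _ => sum_congr rfl fun r _ => ?_
  rw [sub_eq_add_neg, mul_add, exp_add, div_pow]
  ring

/-- Explicit computation of the `TT*` kernel for the major-arc
number-theoretic multipliers (equation (5.5) of the paper): summing
`S(a/q, b/q♭) conj(S(a'/q', b/q♭)) e(w·b/q♭)` over `b ∈ [0,q♭)ⁿ`, with
`q♭ = gcd(q,q')`, equals an average of complete exponential sums. -/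
theorem stmt18 (n d q q' : ℕ) (hn : 0 < n) (hd : 0 < d)
    (hq : 0 < q) (hq' : 0 < q') (a a' : ℤ) (w : Fin n → ℤ) :
    (∑ b : Fin n → Fin (Nat.gcd q q'),
      ((1/(q:ℂ)^n) * ∑ r : Fin n → Fin q,
        Complex.exp (2*Real.pi*Complex.I *
          (((a:ℂ)/(q:ℂ)) * (∑ i, ((r i : ℕ) : ℂ)^2)^d
            + ∑ i, (((b i : ℕ) : ℂ)/((Nat.gcd q q' : ℕ) : ℂ)) * ((r i : ℕ) : ℂ))))
      * (starRingEnd ℂ) ((1/(q':ℂ)^n) * ∑ r' : Fin n → Fin q',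
          Complex.exp (2*Real.pi*Complex.I *
            (((a':ℂ)/(q':ℂ)) * (∑ i, ((r' i : ℕ) : ℂ)^2)^d
              + ∑ i, (((b i : ℕ) : ℂ)/((Nat.gcd q q' : ℕ) : ℂ)) * ((r' i : ℕ) : ℂ))))
      * Complex.exp (2*Real.pi*Complex.I *
          (∑ i, (w i : ℂ) * (((b i : ℕ) : ℂ)/((Nat.gcd q q' : ℕ) : ℂ)))))
    = (((Nat.gcd q q' : ℕ) : ℂ)/(q':ℂ))^n *
      ∑ u : Fin n → Fin (q' / Nat.gcd q q'),
        (1/(q:ℂ)^n) * ∑ r : Fin n → Fin q,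
          Complex.exp (2*Real.pi*Complex.I *
            (((a:ℂ)/(q:ℂ)) * (∑ i, ((r i : ℕ) : ℂ)^2)^d
              - ((a':ℂ)/(q':ℂ)) *
                (∑ i, (((r i : ℕ) : ℂ) + (w i : ℂ)
                  + ((Nat.gcd q q' : ℕ) : ℂ) * ((u i : ℕ) : ℂ))^2)^d)) :=
  stmt18_general n d q q' hq hq' a a' w
end
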